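/- Let G = (V, E) be a finite simple graph, β ≥ 5 a real, f(β) := 1 − 3/β, and K an integer. Let ℓ : V → ℤ satisfy ℓ(v) ≥ K for all v, let w : E → ℝ≥0 be edge weights with node weights W_v, let E^r := {(u,v) ∈ E : ℓ(u) = ℓ(v) = K}, and let w^r : E → ℝ≥0 be residual edge weights with w^r(e) = 0 for every e ∉ E^r, with residual node weights W^r_v. Assume: (i) W_v ≥ f(β) for every node v with ℓ(v) > K; and (b) every edge (u,v) ∈ E^r has an endpoint x ∈ {u,v} with W_x + W^r_x ≥ 1 − 1/β. Then V* := {v ∈ V : W_v + W^r_v ≥ f(β)} is a vertex cover of G. -/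

import Mathlib

open Finset

variable {V : Type*}

/-- The weight of a node `v`: the sum of the weights of the edges incident on `v`. -/
noncomputable def nodeWeight [Fintype V] [DecidableEq V] (G : SimpleGraph V)
    [DecidableRel G.Adj] (w : Sym2 V → ℝ) (v : V) : ℝ :=
  ∑ e ∈ G.edgeFinset, if v ∈ e then w e else 0

/-- A fractional matching: nonnegative edge weights with all node weights at most 1. -/
def IsFractionalMatching [Fintype V] [DecidableEq V] (G : SimpleGraph V)
    [DecidableRel G.Adj] (w : Sym2 V → ℝ) : Prop :=
  (∀ e ∈ G.edgeFinset, 0 ≤ w e) ∧ ∀ v, nodeWeight G w v ≤ 1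

/-- A vertex cover: every edge has at least one endpoint in the set. -/
def IsVertexCover (G : SimpleGraph V) (C : Set V) : Prop :=
  ∀ ⦃u v : V⦄, G.Adj u v → u ∈ C ∨ v ∈ C

/-!
An edge with an endpoint above level `K` is covered by that endpoint, since residual weights
are nonnegative and `W_v ≥ f(β)` there. An edge with both endpoints at level `K` lies in `E^r`,
so by (b) one endpoint has `W + W^r ≥ 1 - 1/β ≥ 1 - 3/β`.
-/

theorem nodeWeight_nonneg [Fintype V] [DecidableEq V] (G : SimpleGraph V) [DecidableRel G.Adj]
    {w : Sym2 V → ℝ} (hw : ∀ e ∈ G.edgeFinset, 0 ≤ w e) (v : V) : 0 ≤ nodeWeight G w v :=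
  Finset.sum_nonneg fun e he => by
    split_ifs
    exacts [hw e he, le_rfl]

theorem stmt5_general [Fintype V] [DecidableEq V] (G : SimpleGraph V) [DecidableRel G.Adj]
    (β : ℝ) (hβ : 5 ≤ β) (K : ℤ) (ℓ : V → ℤ) (hK : ∀ v : V, K ≤ ℓ v)
    (w wr : Sym2 V → ℝ)
    (hwr : ∀ e ∈ G.edgeFinset, 0 ≤ wr e)
    -- (i) every node at level above K has weight at least f(β) = 1 - 3/β
    (hi : ∀ v : V, K < ℓ v → 1 - 3 / β ≤ nodeWeight G w v)
    -- (b) every edge of E^r has an endpoint x with W_x + W^r_x ≥ 1 - 1/β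
    (hb : ∀ u v : V, G.Adj u v → ℓ u = K → ℓ v = K →
      1 - 1 / β ≤ nodeWeight G w u + nodeWeight G wr u ∨
      1 - 1 / β ≤ nodeWeight G w v + nodeWeight G wr v) :
    IsVertexCover G {v : V | 1 - 3 / β ≤ nodeWeight G w v + nodeWeight G wr v} := by
  have hf : 1 - 3 / β ≤ 1 - 1 / β := by
    have : 0 < β := by linarith
    gcongr
    norm_num
  have hcover_above : ∀ x, K < ℓ x → 1 - 3 / β ≤ nodeWeight G w x + nodeWeight G wr x :=
    fun x hx => le_add_of_le_of_nonneg (hi x hx) (nodeWeight_nonneg G hwr x)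
  intro u v huv
  rcases (hK u).lt_or_eq with hu | hu
  · exact Or.inl (hcover_above u hu)
  rcases (hK v).lt_or_eq with hv | hv
  · exact Or.inr (hcover_above v hv)
  exact (hb u v huv hu.symm hv.symm).imp hf.trans hf.trans

theorem stmt5 [Fintype V] [DecidableEq V] (G : SimpleGraph V) [DecidableRel G.Adj]
    (β : ℝ) (hβ : 5 ≤ β) (K : ℤ) (ℓ : V → ℤ) (hK : ∀ v : V, K ≤ ℓ v)
    (w wr : Sym2 V → ℝ)
    (hw : ∀ e ∈ G.edgeFinset, 0 ≤ w e) (hwr : ∀ e ∈ G.edgeFinset, 0 ≤ wr e)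
    -- the residual weights vanish outside E^r = {(u,v) ∈ E : ℓ u = K ∧ ℓ v = K}
    (hwr0 : ∀ u v : V, ¬ (G.Adj u v ∧ ℓ u = K ∧ ℓ v = K) → wr s(u, v) = 0)
    -- (i) every node at level above K has weight at least f(β) = 1 - 3/β
    (hi : ∀ v : V, K < ℓ v → 1 - 3 / β ≤ nodeWeight G w v)
    -- (b) every edge of E^r has an endpoint x with W_x + W^r_x ≥ 1 - 1/β
    (hb : ∀ u v : V, G.Adj u v → ℓ u = K → ℓ v = K →
      1 - 1 / β ≤ nodeWeight G w u + nodeWeight G wr u ∨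
      1 - 1 / β ≤ nodeWeight G w v + nodeWeight G wr v) :
    IsVertexCover G {v : V | 1 - 3 / β ≤ nodeWeight G w v + nodeWeight G wr v} :=
  stmt5_general G β hβ K ℓ hK w wr hwr hi hb
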